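/- Let a₀, β₀, γ, c, d, e, Ω ∈ ℝ with a₀ ≠ 0, γ ≠ 0, Ω = −a₀γ, and suppose the number −(2c w*² + 4d w* + 4e)/γ is positive, where w* = −β₀/a₀, and set r* = √(−(2c w*² + 4d w* + 4e)/γ) > 0. Define f₁ : (0,∞) × ℝ → ℝ² by f₁(r,w) = ( π r (a₀ w + β₀) , (π/2)(γ r² + 2 c w² + 4 d w + 4 e) ). Then f₁(r*, w*) = (0,0), the Jacobian of f₁ at (r*, w*) equals [[0, π a₀ r*], [π γ r*, 2π(c w* + d)]], and its eigenvalues are η ± √(η² − π² Ω r*²), where η = π(a₀ d − c β₀)/a₀. In particular, if η² < π² Ω r*² the eigenvalues are a complex conjugate pair with real part η. -/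

import Mathlib

/-!
On the line `w = w*` the factor `a₀w + β₀` vanishes, so the first component of `f₁` is zero
for every `r`, and `r*` is exactly the root of the second component. At such a point the
Jacobian has a zero top-left entry, trace `2π(cw* + d) = 2η` and determinant
`-π²a₀γr*² = π²Ωr*²`, so its characteristic polynomial is `(z - η)² - (η² - π²Ωr*²)`.
-/

open Real

/-- The first-order averaged function `f₁` in the coordinates `(r, w)`. -/
noncomputable def averagedField (a₀ β₀ γ c d e : ℝ) : ℝ × ℝ → ℝ × ℝ := fun p =>
  (π * p.1 * (a₀ * p.2 + β₀), π / 2 * (γ * p.1 ^ 2 + 2 * c * p.2 ^ 2 + 4 * d * p.2 + 4 * e))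

theorem hasFDerivAt_averagedField (a₀ β₀ γ c d e r w : ℝ) :
    HasFDerivAt (averagedField a₀ β₀ γ c d e)
      (((π * (a₀ * w + β₀)) • ContinuousLinearMap.fst ℝ ℝ ℝ
          + (π * a₀ * r) • ContinuousLinearMap.snd ℝ ℝ ℝ).prod
        ((π * γ * r) • ContinuousLinearMap.fst ℝ ℝ ℝ
          + (2 * π * (c * w + d)) • ContinuousLinearMap.snd ℝ ℝ ℝ)) (r, w) := by
  have hr : HasFDerivAt (fun p : ℝ × ℝ => p.1) (ContinuousLinearMap.fst ℝ ℝ ℝ) (r, w) :=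
    hasFDerivAt_fst
  have hw : HasFDerivAt (fun p : ℝ × ℝ => p.2) (ContinuousLinearMap.snd ℝ ℝ ℝ) (r, w) :=
    hasFDerivAt_snd
  refine (((hr.const_mul π).mul ((hw.const_mul a₀).add_const β₀)).prodMk
    (((((hr.pow 2).const_mul γ).add ((hw.pow 2).const_mul (2 * c))).add
      (hw.const_mul (4 * d))).add_const (4 * e) |>.const_mul (π / 2))).congr_fderiv ?_
  ext <;> simp <;> ring

theorem det_smul_one_sub_of_entry_zero_zero {R : Type*} [CommRing R] (z p q η : R) :
    (z • (1 : Matrix (Fin 2) (Fin 2) R) - !![0, p; q, 2 * η]).det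
      = (z - η) ^ 2 - (η ^ 2 + p * q) := by
  simp [Matrix.det_fin_two]
  ring

theorem sub_sq_eq_neg_sq_iff (z η : ℂ) (s : ℝ) :
    (z - η) ^ 2 = -(s : ℂ) ^ 2 ↔ z = η + Complex.I * s ∨ z = η - Complex.I * s := by
  rw [show -(s : ℂ) ^ 2 = (Complex.I * s) ^ 2 by rw [mul_pow, Complex.I_sq]; ring,
    sq_eq_sq_iff_eq_or_eq_neg, sub_eq_iff_eq_add', sub_eq_iff_eq_add', ← sub_eq_add_neg]

/-- With `a₀ ≠ 0`, `γ ≠ 0`, `Ω = -a₀γ`, `w* = -β₀/a₀` and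
`r* = √(-(2c w*² + 4d w* + 4e)/γ) > 0`, the first-order Melnikov function
`f₁(r,w) = (πr(a₀w + β₀), (π/2)(γr² + 2cw² + 4dw + 4e))` vanishes at `(r*, w*)`,
its Jacobian there is `[[0, πa₀r*], [πγr*, 2π(cw* + d)]]`, whose eigenvalues `z` are
characterized by `(z - η)² = η² - π²Ωr*²` where `η = π(a₀d - cβ₀)/a₀`, i.e. they are
`η ± √(η² - π²Ωr*²)`.  In particular, if `η² < π²Ωr*²`, the eigenvalues are the complex
conjugate pair `η ± i√(π²Ωr*² - η²)`, with real part `η`. -/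
theorem stmt_6 (a₀ β₀ γ c d e Ω wstar rstar η : ℝ)
    (ha₀ : a₀ ≠ 0) (hγ : γ ≠ 0) (hΩ : Ω = -(a₀*γ))
    (hwstar : wstar = -β₀/a₀)
    (hpos : 0 < -(2*c*wstar^2 + 4*d*wstar + 4*e)/γ)
    (hrstar : rstar = Real.sqrt (-(2*c*wstar^2 + 4*d*wstar + 4*e)/γ))
    (hη : η = Real.pi*(a₀*d - c*β₀)/a₀)
    (f₁ : ℝ × ℝ → ℝ × ℝ)
    (hf₁ : f₁ = fun p => (Real.pi * p.1 * (a₀*p.2 + β₀),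
      Real.pi/2 * (γ*p.1^2 + 2*c*p.2^2 + 4*d*p.2 + 4*e))) :
    f₁ (rstar, wstar) = (0, 0) ∧
    HasFDerivAt f₁
      (((Real.pi*a₀*rstar) • ContinuousLinearMap.snd ℝ ℝ ℝ).prod
        ((Real.pi*γ*rstar) • ContinuousLinearMap.fst ℝ ℝ ℝ
          + (2*Real.pi*(c*wstar + d)) • ContinuousLinearMap.snd ℝ ℝ ℝ)) (rstar, wstar) ∧
    (∀ z : ℂ,
      Matrix.det (z • (1 : Matrix (Fin 2) (Fin 2) ℂ)
          - !![0, ((Real.pi*a₀*rstar : ℝ) : ℂ);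
               ((Real.pi*γ*rstar : ℝ) : ℂ), ((2*Real.pi*(c*wstar + d) : ℝ) : ℂ)]) = 0
        ↔ (z - (η : ℂ))^2 = ((η^2 - Real.pi^2*Ω*rstar^2 : ℝ) : ℂ)) ∧
    (η^2 < Real.pi^2*Ω*rstar^2 →
      ∀ z : ℂ,
        Matrix.det (z • (1 : Matrix (Fin 2) (Fin 2) ℂ)
            - !![0, ((Real.pi*a₀*rstar : ℝ) : ℂ);
                 ((Real.pi*γ*rstar : ℝ) : ℂ), ((2*Real.pi*(c*wstar + d) : ℝ) : ℂ)]) = 0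
          ↔ z = (η : ℂ) + Complex.I * ((Real.sqrt (Real.pi^2*Ω*rstar^2 - η^2) : ℝ) : ℂ)
            ∨ z = (η : ℂ) - Complex.I * ((Real.sqrt (Real.pi^2*Ω*rstar^2 - η^2) : ℝ) : ℂ)) := by
  have hf : f₁ = averagedField a₀ β₀ γ c d e := hf₁
  subst hf
  have hw : a₀ * wstar + β₀ = 0 := by rw [hwstar]; field_simp; ring
  have hr : γ * rstar ^ 2 + (2 * c * wstar ^ 2 + 4 * d * wstar + 4 * e) = 0 := by
    rw [hrstar, sq_sqrt hpos.le]; field_simp; ring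
  have htrace : 2 * π * (c * wstar + d) = 2 * η := by rw [hη, hwstar]; field_simp; ring
  have hdet : ∀ z : ℂ,
      Matrix.det (z • (1 : Matrix (Fin 2) (Fin 2) ℂ)
          - !![0, ((π * a₀ * rstar : ℝ) : ℂ);
               ((π * γ * rstar : ℝ) : ℂ), ((2 * π * (c * wstar + d) : ℝ) : ℂ)])
        = (z - η) ^ 2 - ((η ^ 2 - π ^ 2 * Ω * rstar ^ 2 : ℝ) : ℂ) := by
    intro z
    push_cast [htrace, hΩ]
    rw [det_smul_one_sub_of_entry_zero_zero]
    ring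
  refine ⟨?_, ?_, fun z => by rw [hdet, sub_eq_zero], fun hlt z => ?_⟩
  · simp only [averagedField, hw, Prod.mk.injEq, mul_zero, true_and]
    linear_combination π / 2 * hr
  · simpa [hw] using hasFDerivAt_averagedField a₀ β₀ γ c d e rstar wstar
  · rw [hdet, sub_eq_zero, ← sub_sq_eq_neg_sq_iff, ← Complex.ofReal_pow,
      sq_sqrt (by linarith), ← Complex.ofReal_neg, neg_sub]
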